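/- arXiv:2605.20579 — 4 statements merged into one kernel-verified Lean document; each statement's English description precedes it below -/
import Mathlib

section
/- Let m be a positive integer, Λ a full-rank lattice in ℝ^m, ‖·‖ a norm on ℝ^m, and R > 1 a real number. Then there exists a point w ∈ ℝ^m such that #{v ∈ Λ : ‖v − w‖ ≤ R − 1} ≥ (1 − 1/R)^m · #{v ∈ Λ : ‖v − w‖ ≤ R}. -/
/-!
Let `N_r(w)` be the number of lattice points in the closed `r`-ball around `w`. Integrating
`N_r` over a fundamental domain `F` of `Λ` unfolds the sum over the lattice into the Haar
volume of a single `r`-ball, and these volumes scale like `r ^ m`. Hence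
`∫_F N_{R-1} = (1 - 1/R) ^ m ∫_F N_R`, so `N_{R-1}(w) ≥ (1 - 1/R) ^ m N_R(w)` cannot fail at
every point `w` of `F`, a set of positive measure.
-/

open MeasureTheory Module Metric Set
open scoped ENNReal Pointwise

theorem exists_le_of_setLIntegral_le {α : Type*} [MeasurableSpace α] {μ : Measure α}
    {f g : α → ℝ≥0∞} {s : Set α} (hs : MeasurableSet s) (hμs : μ s ≠ 0) (hf : Measurable f)
    (hg : ∫⁻ x in s, g x ∂μ ≠ ∞) (hfg : ∫⁻ x in s, f x ∂μ ≤ ∫⁻ x in s, g x ∂μ) :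
    ∃ x ∈ s, f x ≤ g x := by
  by_contra! h
  exact (setLIntegral_strict_mono hs hμs hf hg (.of_forall h)).not_ge hfg

theorem MeasureTheory.IsAddFundamentalDomain.setLIntegral_tsum_indicator_vadd
    {G α : Type*} [AddGroup G] [Countable G] [AddAction G α] [MeasurableSpace α]
    [MeasurableConstVAdd G α] {μ : Measure α} [VAddInvariantMeasure G α μ] {s t : Set α}
    (h : IsAddFundamentalDomain G s μ) (ht : MeasurableSet t) :
    ∫⁻ x in s, ∑' g : G, (g +ᵥ t).indicator 1 x ∂μ = μ t := by
  rw [lintegral_tsum fun g => (measurable_one.indicator (ht.const_vadd g)).aemeasurable,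
    h.measure_eq_tsum]
  refine tsum_congr fun g => ?_
  rw [lintegral_indicator_one (ht.const_vadd g), Measure.restrict_apply (ht.const_vadd g)]

theorem MeasureTheory.Measure.addHaar_closedBall_sub_one {E : Type*} [NormedAddCommGroup E]
    [NormedSpace ℝ E] [MeasurableSpace E] [BorelSpace E] [FiniteDimensional ℝ E]
    (μ : Measure E) [μ.IsAddHaarMeasure] (x : E) {R : ℝ} (hR : 1 < R) :
    μ (closedBall x (R - 1)) =
      ENNReal.ofReal ((1 - 1 / R) ^ finrank ℝ E) * μ (closedBall x R) := by
  have hscale : (1 - 1 / R) * R = R - 1 := by field_simp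
  rw [← hscale, μ.addHaar_closedBall_center x R]
  exact μ.addHaar_closedBall_mul_of_pos x (sub_pos.mpr ((div_lt_one (by linarith)).mpr hR)) R

section DiscreteSubmodule

variable {E : Type*} [NormedAddCommGroup E] [NormedSpace ℝ E] [FiniteDimensional ℝ E]
  (L : Submodule ℤ E) [DiscreteTopology L]

theorem Submodule.finite_setOf_mem_and_norm_sub_le (w : E) (r : ℝ) :
    {v : E | v ∈ L ∧ ‖v - w‖ ≤ r}.Finite := by
  have : DiscreteTopology L.toAddSubgroup := inferInstanceAs (DiscreteTopology L)
  refine (finite_isBounded_inter_isClosed DiscreteTopology.isDiscrete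
    (isBounded_closedBall (x := w) (r := r)) L.toAddSubgroup.isClosed_of_discrete).subset ?_
  rintro v ⟨hv, hvr⟩
  exact ⟨mem_closedBall_iff_norm.mpr hvr, hv⟩

theorem Submodule.ncard_setOf_mem_and_norm_sub_le_eq_tsum (w : E) (r : ℝ) :
    ({v : E | v ∈ L ∧ ‖v - w‖ ≤ r}.ncard : ℝ≥0∞) =
      ∑' l : L, (l +ᵥ closedBall (0 : E) r).indicator 1 w := by
  have himage : {v : E | v ∈ L ∧ ‖v - w‖ ≤ r} =
      Subtype.val '' {l : L | w ∈ l +ᵥ closedBall (0 : E) r} := by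
    ext v
    simp [Submodule.vadd_def, dist_eq_norm', and_comm]
  have hterm (l : L) : (l +ᵥ closedBall (0 : E) r).indicator (1 : E → ℝ≥0∞) w =
      {l : L | w ∈ l +ᵥ closedBall (0 : E) r}.indicator 1 l :=
    rfl
  rw [tsum_congr hterm, ← tsum_subtype]
  simp only [Pi.one_apply]
  rw [ENNReal.tsum_set_one, ← Subtype.val_injective.encard_image, ← himage,
    ← (Submodule.finite_setOf_mem_and_norm_sub_le L w r).cast_ncard_eq]
  rfl

end DiscreteSubmodule

/-- Let `m` be a positive integer, `Λ` a full-rank lattice in `ℝ^m` (modelled as a discrete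
`ℤ`-submodule `L` of a real normed space `E` of dimension `m`, spanning `E` over `ℝ`), and
`R > 1`.  Then there is a point `w` such that the number of lattice points in the ball of
radius `R - 1` around `w` is at least `(1 - 1/R)^m` times the number of lattice points in the
ball of radius `R` around `w`. -/
theorem exists_center_many_lattice_points (m : ℕ) (hm : 0 < m)
    (E : Type) [NormedAddCommGroup E] [NormedSpace ℝ E]
    (hdim : Module.finrank ℝ E = m)
    (L : Submodule ℤ E) [DiscreteTopology L] [IsZLattice ℝ L]
    (R : ℝ) (hR : 1 < R) :
    ∃ w : E,
      (1 - 1 / R) ^ m * ({v : E | v ∈ L ∧ ‖v - w‖ ≤ R}.ncard : ℝ) ≤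
        ({v : E | v ∈ L ∧ ‖v - w‖ ≤ R - 1}.ncard : ℝ) := by
  have : FiniteDimensional ℝ E := .of_finrank_pos (hdim ▸ hm)
  borelize E
  let μ : Measure E := .addHaar
  have : VAddInvariantMeasure L E μ := inferInstanceAs (VAddInvariantMeasure L.toAddSubgroup E μ)
  let F := ZSpan.fundamentalDomain ((Module.Free.chooseBasis ℤ L).ofZLatticeBasis ℝ)
  have hF : IsAddFundamentalDomain L F μ := ZLattice.isAddFundamentalDomain _ μ
  let N (r : ℝ) (w : E) : ℝ≥0∞ := ∑' l : L, (l +ᵥ closedBall (0 : E) r).indicator 1 w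
  have hN (r : ℝ) : ∫⁻ w in F, N r w ∂μ = μ (closedBall 0 r) :=
    hF.setLIntegral_tsum_indicator_vadd measurableSet_closedBall
  have hNmeas (r : ℝ) : Measurable (N r) :=
    .tsum fun l => measurable_one.indicator (measurableSet_closedBall.const_vadd l)
  obtain ⟨w, -, hw⟩ := exists_le_of_setLIntegral_le (g := N (R - 1))
    (ZSpan.fundamentalDomain_measurableSet _) (ZSpan.measure_fundamentalDomain_ne_zero _)
    ((hNmeas R).const_mul (ENNReal.ofReal ((1 - 1 / R) ^ m)))
    (by rw [hN]; exact (isCompact_closedBall _ _).measure_lt_top.ne)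
    (by rw [lintegral_const_mul _ (hNmeas R), hN, hN, μ.addHaar_closedBall_sub_one 0 hR, hdim])
  refine ⟨w, ?_⟩
  have hc : 0 ≤ (1 - 1 / R) ^ m :=
    pow_nonneg (sub_nonneg.mpr ((div_le_one (by linarith)).mpr hR.le)) m
  simp only [N, ← Submodule.ncard_setOf_mem_and_norm_sub_le_eq_tsum] at hw
  rw [← ENNReal.ofReal_natCast, ← ENNReal.ofReal_natCast, ← ENNReal.ofReal_mul hc] at hw
  exact (ENNReal.ofReal_le_ofReal_iff (Nat.cast_nonneg _)).mp hw
end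

section
/- Let I be a fractional ideal of K and let α be a nonzero element of N_{K/F}(I). Regard I as a lattice Λ in ∏_{v ∈ Σ_{F,∞}} K_v ≅ ∏_{v ∈ Σ_{F,∞}} ℂ ≅ ℝ^{2d} via the completions at the places of K above the infinite places of F, equipped with the norm ‖x‖ = sup_{v ∈ Σ_{F,∞}} |x_v| / √(|α|_v). Fix an infinite place v₀ of F and let π : I → ℝ² be the composite I → K → K_{v₀} ≅ ℂ ≅ ℝ² divided by √(|α|_{v₀}). Then: (i) every nonzero vector of Λ has norm at least (#(N_{K/F}(I)/(αO_F)))^{−1/(2d)}, and (ii) every β ∈ I with β·c(β) = α satisfies ‖β‖ = 1 and |π(β)| = 1, where |·| is the Euclidean norm on ℝ². -/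
open NumberField

variable (F K : Type) [Field F] [NumberField F] [Field K] [NumberField K] [Algebra F K]

/-- The fractional ideal `N_{K/F}(I)` of `F`, realized as the `𝓞 F`-submodule of `F`
generated by the elements `β * c β` for `β ∈ I`. -/
noncomputable def normSpan (c : K ≃ₐ[F] K) (I : FractionalIdeal (nonZeroDivisors (𝓞 K)) K) :
    Submodule (𝓞 F) F :=
  Submodule.span (𝓞 F) {x : F | ∃ β ∈ (I : Submodule (𝓞 K) K), algebraMap F K x = β * c β}

/-- The cardinality of the quotient `N_{K/F}(I)/(α 𝓞_F)`. -/
noncomputable def normQuotCard (c : K ≃ₐ[F] K) (I : FractionalIdeal (nonZeroDivisors (𝓞 K)) K)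
    (α : F) : ℕ :=
  Nat.card ((normSpan F K c I) ⧸
    (Submodule.comap (normSpan F K c I).subtype (Submodule.span (𝓞 F) {α})))

/-!
If `w` is the place of `K` above the real place `v` of `F`, then `w` is ramified, so `c` fixes `w`
and `|β|_w ^ 2 = v (β · c β)`; in particular `β · c β = α` forces every coordinate to have
length `1`. For (i), `x = β · c β` lies in `N_{K/F}(I)`, and the chain
`α𝓞 ⊆ α𝓞 + x𝓞 ⊆ N_{K/F}(I)` together with the multiplicativity of indices gives
`|N(α)| ≤ [N_{K/F}(I) : α𝓞] · |N(x)|`. By the product formula over the `d` real places,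
`∏_v (|β|_w / √|α|_v) ^ 2 = |N(x)| / |N(α)|`, and the largest of the `d` factors is at least
their geometric mean.
-/

section QuadraticExtension

variable {k L : Type*} [Field k] [Field L] [Algebra k L]

theorem AlgEquiv.eq_one_or_eq_of_finrank_eq_two (h : Module.finrank k L = 2) {c : Gal(L/k)}
    (hc : c ≠ 1) (σ : Gal(L/k)) : σ = 1 ∨ σ = c := by
  classical
  have : FiniteDimensional k L := Module.finite_of_finrank_eq_succ h
  have huniv : ({1, c} : Finset Gal(L/k)) = Finset.univ :=
    Finset.eq_of_subset_of_card_le (Finset.subset_univ _) <| by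
      rw [Finset.card_pair hc.symm, Finset.card_univ, ← h]
      exact AlgEquiv.card_le
  have hσ : σ ∈ ({1, c} : Finset Gal(L/k)) := huniv ▸ Finset.mem_univ σ
  simpa using hσ

theorem IsGalois.of_finrank_eq_two (h : Module.finrank k L = 2) {c : Gal(L/k)} (hc : c ≠ 1) :
    IsGalois k L := by
  have : FiniteDimensional k L := Module.finite_of_finrank_eq_succ h
  refine IsGalois.of_card_aut_eq_finrank k L ?_
  rw [h, Nat.card_eq_two_iff]
  exact ⟨1, c, hc.symm, Set.eq_univ_of_forall fun σ => by
    simpa using AlgEquiv.eq_one_or_eq_of_finrank_eq_two h hc σ⟩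

theorem algebraMap_norm_eq_mul_of_finrank_eq_two (h : Module.finrank k L = 2) {c : Gal(L/k)}
    (hc : c ≠ 1) (x : L) : algebraMap k L (Algebra.norm k x) = x * c x := by
  have : FiniteDimensional k L := Module.finite_of_finrank_eq_succ h
  have := IsGalois.of_finrank_eq_two h hc
  rw [Algebra.norm_eq_prod_automorphisms, Fintype.prod_eq_mul 1 c hc.symm fun σ hσ =>
    ((AlgEquiv.eq_one_or_eq_of_finrank_eq_two h hc σ).elim hσ.1 hσ.2).elim]
  rfl

namespace NumberField.InfinitePlace

theorem apply_algEquiv_of_isRamified [IsGalois k L] (h : Module.finrank k L = 2)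
    {w : InfinitePlace L} (hw : IsRamified k w) (σ : Gal(L/k)) (x : L) : w (σ x) = w x := by
  have : FiniteDimensional k L := Module.finite_of_finrank_eq_succ h
  have hstab : MulAction.stabilizer Gal(L/k) w = ⊤ := by
    refine Subgroup.eq_top_of_card_eq _ ?_
    rw [isRamified_iff_card_stabilizer_eq_two.mp hw, IsGalois.card_aut_eq_finrank, h]
  have hσ : σ⁻¹ • w = w := MulAction.mem_stabilizer_iff.mp (hstab ▸ Subgroup.mem_top σ⁻¹)
  conv_rhs => rw [← hσ, smul_apply]
  rfl

theorem sq_apply_eq_comap_norm [IsGalois k L] (h : Module.finrank k L = 2)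
    {w : InfinitePlace L} (hw : IsRamified k w) (x : L) :
    w x ^ 2 = w.comap (algebraMap k L) (Algebra.norm k x) := by
  have : FiniteDimensional k L := Module.finite_of_finrank_eq_succ h
  rw [comap_apply, Algebra.norm_eq_prod_automorphisms, map_prod]
  simp only [apply_algEquiv_of_isRamified h hw, Finset.prod_const, Finset.card_univ]
  rw [← Nat.card_eq_fintype_card, IsGalois.card_aut_eq_finrank, h]

end NumberField.InfinitePlace

end QuadraticExtension

theorem AddSubgroup.index_le_relIndex_mul_index {G : Type*} [AddGroup G] {H K J : AddSubgroup G}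
    (hHJ : H ≤ J) (hKJ : K ≤ J) (hK : K.index ≠ 0) : H.index ≤ H.relIndex J * K.index := by
  rw [← relIndex_mul_index hHJ]
  exact Nat.mul_le_mul_left _ (Nat.le_of_dvd (Nat.pos_of_ne_zero hK) (index_dvd_of_le hKJ))

theorem Submodule.relIndex_map_of_injective {R M N : Type*} [Ring R] [AddCommGroup M]
    [Module R M] [AddCommGroup N] [Module R N] {f : M →ₗ[R] N} (hf : Function.Injective f)
    (A B : Submodule R M) :
    (A.map f).toAddSubgroup.relIndex (B.map f).toAddSubgroup =
      A.toAddSubgroup.relIndex B.toAddSubgroup := by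
  rw [Submodule.map_toAddSubgroup, Submodule.map_toAddSubgroup]
  exact AddSubgroup.relIndex_map_map_of_injective _ _ hf

theorem Ideal.absNorm_span_singleton_le_relIndex_mul {S : Type*} [CommRing S] [IsDedekindDomain S]
    [Module.Free ℤ S] [Module.Finite ℤ S] (a : S) {y : S} (hy : y ≠ 0) :
    absNorm (span {a}) ≤
      (span {a}).toAddSubgroup.relIndex (span {a, y}).toAddSubgroup * absNorm (span {y}) := by
  refine AddSubgroup.index_le_relIndex_mul_index
    (Submodule.toAddSubgroup_mono (span_mono (Set.singleton_subset_iff.mpr (Set.mem_insert a {y}))))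
    (Submodule.toAddSubgroup_mono
      (span_mono (Set.singleton_subset_iff.mpr (Set.mem_insert_of_mem a rfl)))) ?_
  change absNorm (span {y}) ≠ 0
  rwa [Ne, absNorm_eq_zero_iff, span_singleton_eq_bot]

theorem abs_norm_le_relIndex_mul_abs_norm {E : Type*} [Field E] [NumberField E]
    {M : Submodule (𝓞 E) E} {α x : E} (hαM : α ∈ M) (hxM : x ∈ M) (hx0 : x ≠ 0)
    (hN : (Submodule.span (𝓞 E) {α}).toAddSubgroup.relIndex M.toAddSubgroup ≠ 0) :
    |Algebra.norm ℚ α| ≤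
      (Submodule.span (𝓞 E) {α}).toAddSubgroup.relIndex M.toAddSubgroup * |Algebra.norm ℚ x| := by
  classical
  set N := (Submodule.span (𝓞 E) {α}).toAddSubgroup.relIndex M.toAddSubgroup
  obtain ⟨u, hu⟩ :=
    IsLocalization.exist_integer_multiples_of_finset (nonZeroDivisors (𝓞 E)) {α, x}
  obtain ⟨a, ha⟩ := hu α (by simp)
  obtain ⟨y, hy⟩ := hu x (by simp)
  rw [Algebra.smul_def] at ha hy
  set v : E := algebraMap (𝓞 E) E u
  have hv0 : v ≠ 0 := by simp [v, nonZeroDivisors.ne_zero u.2]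
  have hy0 : y ≠ 0 := by rintro rfl; simp [hx0, hv0] at hy
  -- dividing by `v` carries the ideals `(a) ≤ (a, y)` of `𝓞 E` onto `α𝓞 ≤ α𝓞 + x𝓞`
  set f : 𝓞 E →ₗ[𝓞 E] E := LinearMap.mulLeft (𝓞 E) v⁻¹ ∘ₗ Algebra.linearMap (𝓞 E) E
  have hf : Function.Injective f :=
    (mul_right_injective₀ (inv_ne_zero hv0)).comp RingOfIntegers.coe_injective
  have hfa : f a = α := by simp [f, ha, hv0]
  have hfy : f y = x := by simp [f, hy, hv0]
  have hscale : (Ideal.span {a}).toAddSubgroup.relIndex (Ideal.span {a, y}).toAddSubgroup =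
      (Submodule.span (𝓞 E) {α}).toAddSubgroup.relIndex
        (Submodule.span (𝓞 E) {α, x}).toAddSubgroup := by
    rw [← Submodule.relIndex_map_of_injective hf, Ideal.span, Ideal.span, Submodule.map_span,
      Submodule.map_span, Set.image_singleton, Set.image_pair, hfa, hfy]
  have hP : (Submodule.span (𝓞 E) {α}).toAddSubgroup.relIndex
      (Submodule.span (𝓞 E) {α, x}).toAddSubgroup ≤ N :=
    AddSubgroup.relIndex_le_of_le_right
      (Submodule.span_le.mpr (Set.insert_subset hαM (Set.singleton_subset_iff.mpr hxM))) hN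
  have hint : Ideal.absNorm (Ideal.span {a}) ≤ N * Ideal.absNorm (Ideal.span {y}) :=
    (Ideal.absNorm_span_singleton_le_relIndex_mul a hy0).trans
      (Nat.mul_le_mul_right _ (hscale ▸ hP))
  have habs (r : 𝓞 E) : (Ideal.absNorm (Ideal.span {r}) : ℚ) = |Algebra.norm ℚ (r : E)| := by
    rw [Ideal.absNorm_span_singleton, Nat.cast_natAbs, ← Algebra.coe_norm_int]
    push_cast
    rfl
  refine le_of_mul_le_mul_left ?_ (abs_pos.mpr (Algebra.norm_ne_zero_iff.mpr hv0))
  rw [mul_left_comm, ← abs_mul, ← abs_mul, ← map_mul, ← map_mul, ← ha, ← hy, ← habs, ← habs]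
  exact_mod_cast hint

namespace NumberField.InfinitePlace

variable {E : Type*} [Field E] [NumberField E] [IsTotallyReal E]

theorem prod_eq_abs_norm_of_isTotallyReal (x : E) :
    ∏ v : InfinitePlace E, v x = |Algebra.norm ℚ x| := by
  simpa [IsTotallyReal.mult_eq] using prod_eq_abs_norm x

theorem card_eq_finrank_of_isTotallyReal : Fintype.card (InfinitePlace E) = Module.finrank ℚ E := by
  rw [card_eq_nrRealPlaces_add_nrComplexPlaces, IsTotallyReal.nrComplexPlaces_eq_zero,
    IsTotallyReal.finrank, add_zero]

theorem inv_le_prod_div_of_abs_norm_le {α x : E} (hα : α ≠ 0) {N : ℕ} (hN : 0 < N)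
    (h : |Algebra.norm ℚ α| ≤ N * |Algebra.norm ℚ x|) :
    (N : ℝ)⁻¹ ≤ ∏ v : InfinitePlace E, v x / v α := by
  rw [Finset.prod_div_distrib, prod_eq_abs_norm_of_isTotallyReal,
    prod_eq_abs_norm_of_isTotallyReal,
    le_div_iff₀ (mod_cast abs_pos.mpr (Algebra.norm_ne_zero_iff.mpr hα)),
    inv_mul_le_iff₀ (by positivity)]
  exact_mod_cast h

end NumberField.InfinitePlace

theorem rpow_neg_one_div_le_iSup_of_inv_le_prod_pow {ι : Type*} [Fintype ι] [Nonempty ι]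
    {f : ι → ℝ} (hf : ∀ i, 0 ≤ f i) {a : ℝ} (ha : 0 ≤ a) {k : ℕ} (hk : k ≠ 0)
    (h : a⁻¹ ≤ ∏ i, f i ^ k) :
    a ^ (-(1 / ((k : ℝ) * Fintype.card ι))) ≤ ⨆ i, f i := by
  have hbdd := Finite.bddAbove_range f
  have hsup : 0 ≤ ⨆ i, f i := (hf (Classical.arbitrary ι)).trans (le_ciSup hbdd _)
  have hprod : ∏ i, f i ^ k ≤ (⨆ i, f i) ^ (k * Fintype.card ι) := by
    rw [pow_mul, ← Finset.card_univ, ← Finset.prod_const]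
    exact Finset.prod_le_prod (fun i _ => pow_nonneg (hf i) k)
      fun i _ => pow_le_pow_left₀ (hf i) (le_ciSup hbdd i) k
  rw [Real.rpow_neg ha, ← Real.inv_rpow ha, one_div, ← Nat.cast_mul]
  calc a⁻¹ ^ ((k * Fintype.card ι : ℕ) : ℝ)⁻¹
      ≤ ((⨆ i, f i) ^ (k * Fintype.card ι)) ^ ((k * Fintype.card ι : ℕ) : ℝ)⁻¹ :=
        Real.rpow_le_rpow (inv_nonneg.mpr ha) (h.trans hprod) (by positivity)
    _ = ⨆ i, f i := Real.pow_rpow_inv_natCast hsup (mul_ne_zero hk Fintype.card_ne_zero)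

/-- Let `F` be a totally real number field of degree `d` and `K` a totally imaginary quadratic
extension of `F`, with `c` the nontrivial element of `Gal(K/F)`.  Let `I` be a fractional
ideal of `K` and `α` a nonzero element of `N_{K/F}(I)`.  View `I` as a lattice in
`∏_{v ∈ Σ_{F,∞}} K_v` with the norm `‖β‖ = sup_v |β|_{w v} / √(|α|_v)`, where `w v` is the
infinite place of `K` above `v`.  Then (i) every nonzero `β ∈ I` has norm at least
`#(N_{K/F}(I)/(α))^{-1/(2d)}`, and (ii) every `β ∈ I` with `β · c β = α` has norm `1` and its
projection `π β` to the plane at each infinite place has Euclidean length `1`. -/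
theorem lattice_from_ideal
    (d : ℕ) (hd : Module.finrank ℚ F = d)
    (htotallyReal : ∀ v : InfinitePlace F, v.IsReal)
    (htotallyImaginary : ∀ w : InfinitePlace K, w.IsComplex)
    (hquadratic : Module.finrank F K = 2)
    (c : K ≃ₐ[F] K) (hc : c ≠ AlgEquiv.refl)
    (I : FractionalIdeal (nonZeroDivisors (𝓞 K)) K)
    (α : F) (hα : α ∈ normSpan F K c I) (hα0 : α ≠ 0)
    (w : InfinitePlace F → InfinitePlace K)
    (hw : ∀ v, (w v).comap (algebraMap F K) = v) :
    (∀ β : K, β ∈ I → β ≠ 0 →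
      (normQuotCard F K c I α : ℝ) ^ (-(1 / (2 * (d : ℝ)))) ≤
        ⨆ v : InfinitePlace F, ((w v) β) / Real.sqrt (v α)) ∧
    (∀ β : K, β ∈ I → β * c β = algebraMap F K α →
      (⨆ v : InfinitePlace F, ((w v) β) / Real.sqrt (v α)) = 1 ∧
      ∀ v₀ : InfinitePlace F, ((w v₀) β) / Real.sqrt (v₀ α) = 1) := by
  have : IsTotallyReal F := ⟨htotallyReal⟩
  have : IsGalois F K := IsGalois.of_finrank_eq_two hquadratic hc
  have hnorm (γ : K) : algebraMap F K (Algebra.norm F γ) = γ * c γ :=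
    algebraMap_norm_eq_mul_of_finrank_eq_two hquadratic hc γ
  have hsq (v : InfinitePlace F) (γ : K) : w v γ ^ 2 = v (Algebra.norm F γ) := by
    rw [(w v).sq_apply_eq_comap_norm hquadratic
      (InfinitePlace.not_isUnramified_iff.mpr ⟨htotallyImaginary _, (hw v).symm ▸ htotallyReal v⟩),
      hw]
  have hvα (v : InfinitePlace F) : 0 < v α := InfinitePlace.pos_iff.mpr hα0
  refine ⟨fun β hβ hβ0 => ?_, fun β _ hβα => ?_⟩
  · have hprod : (normQuotCard F K c I α : ℝ)⁻¹ ≤ ∏ v, (w v β / √(v α)) ^ 2 := by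
      simp_rw [div_pow, hsq, Real.sq_sqrt (hvα _).le]
      rcases (normQuotCard F K c I α).eq_zero_or_pos with hN | hN
      · -- an infinite quotient has `Nat.card` zero, and `(0 : ℝ)⁻¹ = 0`
        rw [hN, Nat.cast_zero, inv_zero]
        exact Finset.prod_nonneg fun v _ => by positivity
      · exact InfinitePlace.inv_le_prod_div_of_abs_norm_le hα0 hN <|
          abs_norm_le_relIndex_mul_abs_norm (M := normSpan F K c I) hα
            (Submodule.subset_span ⟨β, hβ, hnorm β⟩) (Algebra.norm_ne_zero_iff.mpr hβ0) hN.ne'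
    simpa [InfinitePlace.card_eq_finrank_of_isTotallyReal, hd] using
      rpow_neg_one_div_le_iSup_of_inv_le_prod_pow (fun v => by positivity) (Nat.cast_nonneg _)
        two_ne_zero hprod
  · have hβ : Algebra.norm F β = α := (algebraMap F K).injective ((hnorm β).trans hβα)
    have hv (v : InfinitePlace F) : w v β / √(v α) = 1 := by
      rw [div_eq_one_iff_eq (Real.sqrt_pos.mpr (hvα v)).ne', ← hβ, ← hsq,
        Real.sqrt_sq (apply_nonneg _ _)]
    exact ⟨by simp [hv], hv⟩
end

section
/- For every positive integer n, one has n / ∏_{p | n, p prime} p^{1/(p−1)} ≥ √(n/2); equivalently, ∏_{p | n, p prime} p^{2/(p−1)} ≤ 2n. -/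
/-- For every positive integer `n`, one has `n / ∏_{p ∣ n} p^{1/(p-1)} ≥ √(n/2)`;
equivalently, `∏_{p ∣ n} p^{2/(p-1)} ≤ 2n`, the products running over the distinct prime
divisors of `n`. -/
theorem prod_prime_rpow_le (n : ℕ) (hn : 0 < n) :
    Real.sqrt ((n : ℝ) / 2) ≤
        (n : ℝ) / ∏ p ∈ n.primeFactors, (p : ℝ) ^ ((1 : ℝ) / ((p : ℝ) - 1)) ∧
      ∏ p ∈ n.primeFactors, (p : ℝ) ^ ((2 : ℝ) / ((p : ℝ) - 1)) ≤ 2 * (n : ℝ) := by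
  set s := n.primeFactors with hs
  have hprime : ∀ p ∈ s, Nat.Prime p := fun p hp => Nat.prime_of_mem_primeFactors hp
  have hrad : (∏ p ∈ s, (p : ℝ)) ≤ (n : ℝ) := by
    have h := Nat.le_of_dvd hn (Nat.prod_primeFactors_dvd n)
    calc (∏ p ∈ s, (p : ℝ)) = ((∏ p ∈ s, p : ℕ) : ℝ) := by push_cast; rfl
    _ ≤ (n : ℝ) := by exact_mod_cast h
  -- pointwise bound for odd primes
  have hodd : ∀ p ∈ s, p ≠ 2 → (p : ℝ) ^ ((2 : ℝ) / ((p : ℝ) - 1)) ≤ (p : ℝ) := by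
    intro p hp hp2
    have hp' := hprime p hp
    have h3 : 3 ≤ p := by
      rcases hp'.eq_two_or_odd' with h | h
      · exact absurd h hp2
      · have h2 := hp'.two_le
        omega
    have h3' : (3 : ℝ) ≤ (p : ℝ) := by exact_mod_cast h3
    have h1 : (1 : ℝ) ≤ (p : ℝ) := by linarith
    have hexp : (2 : ℝ) / ((p : ℝ) - 1) ≤ 1 := by
      rw [div_le_one (by linarith)]
      linarith
    calc (p : ℝ) ^ ((2 : ℝ) / ((p : ℝ) - 1)) ≤ (p : ℝ) ^ (1 : ℝ) :=
          Real.rpow_le_rpow_of_exponent_le h1 hexp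
    _ = (p : ℝ) := Real.rpow_one _
  have key : ∏ p ∈ s, (p : ℝ) ^ ((2 : ℝ) / ((p : ℝ) - 1)) ≤ 2 * (n : ℝ) := by
    by_cases h2 : 2 ∈ s
    · rw [← Finset.mul_prod_erase s _ h2]
      have hval : ((2 : ℕ) : ℝ) ^ ((2 : ℝ) / (((2 : ℕ) : ℝ) - 1)) = 4 := by
        have h' : ((2 : ℕ) : ℝ) ^ ((2 : ℝ) / (((2 : ℕ) : ℝ) - 1)) =
            ((2 : ℕ) : ℝ) ^ (((2 : ℕ) : ℝ)) := by norm_num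
        rw [h', Real.rpow_natCast]
        norm_num
      rw [hval]
      have hle : ∏ p ∈ s.erase 2, (p : ℝ) ^ ((2 : ℝ) / ((p : ℝ) - 1)) ≤
          ∏ p ∈ s.erase 2, (p : ℝ) := by
        apply Finset.prod_le_prod
        · intro p hp
          exact Real.rpow_nonneg (Nat.cast_nonneg p) _
        · intro p hp
          exact hodd p (Finset.mem_of_mem_erase hp) (Finset.ne_of_mem_erase hp)
      have hrad2 : (2 : ℝ) * ∏ p ∈ s.erase 2, (p : ℝ) ≤ (n : ℝ) := by
        calc (2 : ℝ) * ∏ p ∈ s.erase 2, (p : ℝ)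
            = ∏ p ∈ s, (p : ℝ) := by
              rw [← Finset.mul_prod_erase s _ h2]; norm_num
        _ ≤ (n : ℝ) := hrad
      nlinarith [Finset.prod_nonneg (fun p (_ : p ∈ s.erase 2) =>
        Real.rpow_nonneg (Nat.cast_nonneg p) ((2 : ℝ) / ((p : ℝ) - 1)))]
    · have hle : ∏ p ∈ s, (p : ℝ) ^ ((2 : ℝ) / ((p : ℝ) - 1)) ≤ ∏ p ∈ s, (p : ℝ) := by
        apply Finset.prod_le_prod
        · intro p hp; exact Real.rpow_nonneg (Nat.cast_nonneg p) _
        · intro p hp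
          refine hodd p hp (fun h => h2 ?_)
          rwa [h] at hp
      have : (0 : ℝ) ≤ n := Nat.cast_nonneg n
      linarith
  refine ⟨?_, key⟩
  set P := ∏ p ∈ s, (p : ℝ) ^ ((1 : ℝ) / ((p : ℝ) - 1)) with hP
  have hP0 : 0 < P := by
    apply Finset.prod_pos
    intro p hp
    exact Real.rpow_pos_of_pos (by exact_mod_cast (hprime p hp).pos) _
  have hPsq : P ^ 2 = ∏ p ∈ s, (p : ℝ) ^ ((2 : ℝ) / ((p : ℝ) - 1)) := by
    rw [hP, ← Finset.prod_pow]
    apply Finset.prod_congr rfl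
    intro p hp
    rw [← Real.rpow_natCast ((p : ℝ) ^ ((1 : ℝ) / ((p : ℝ) - 1))) 2,
      ← Real.rpow_mul (Nat.cast_nonneg p)]
    congr 1
    push_cast
    ring
  have hPle : P ^ 2 ≤ 2 * (n : ℝ) := hPsq ▸ key
  rw [le_div_iff₀ hP0]
  -- goal : Real.sqrt (n/2) * P ≤ n
  have hs1 : Real.sqrt ((n : ℝ) / 2) * P ≤ Real.sqrt ((n : ℝ) / 2) * Real.sqrt (2 * n) := by
    apply mul_le_mul_of_nonneg_left _ (Real.sqrt_nonneg _)
    have : P ≤ Real.sqrt (2 * n) := by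
      rw [show P = Real.sqrt (P ^ 2) by rw [Real.sqrt_sq hP0.le]]
      exact Real.sqrt_le_sqrt hPle
    exact this
  have hs2 : Real.sqrt ((n : ℝ) / 2) * Real.sqrt (2 * n) = (n : ℝ) := by
    rw [← Real.sqrt_mul (by positivity)]
    rw [show (n : ℝ) / 2 * (2 * n) = (n : ℝ) ^ 2 by ring]
    exact Real.sqrt_sq (Nat.cast_nonneg n)
  linarith
end

section
/- Let T be a finite set of odd prime numbers such that the number of elements of T congruent to 3 modulo 4 is odd, and let Q = ℚ(√(∏_{q ∈ T} q)). Then for each q ∈ T, the quadratic extension Q(√q)/Q is unramified at every finite place of Q. -/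
/-!
If `P` is ramified over `𝔭`, then `P` divides the different of `L/Q`, so it contains `f'(θ)` for
every integral generator `θ` of `L/Q` with minimal polynomial `f`. Write `∏ T = q m`. Since
`√q √m = s ∈ Q`, `√m` also generates `L`, and `q m ≡ 3 (mod 4)` forces one of `q, m`, say `a`, to
be `≡ 1 (mod 4)`; call the other one `b`. The generators `√b` and `(1 + √a) / 2` give `2 √b ∈ P`
and `√a ∈ P`, hence the coprime integers `2 b` and `a` lie in `P`, which is absurd. If `r ∈ Q`,
then `L = Q` and the different is the unit ideal.
-/

open NumberField Polynomial

theorem natCast_prod_zmod_four {T : Finset ℕ} (hT : ∀ q ∈ T, Odd q) :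
    ((∏ q ∈ T, q : ℕ) : ZMod 4) = (-1) ^ (T.filter (· % 4 = 3)).card := by
  have h3 : ∀ q ∈ T.filter (· % 4 = 3), (q : ZMod 4) = -1 := by
    intro q hq
    rw [← ZMod.natCast_mod, (Finset.mem_filter.mp hq).2]
    rfl
  have h1 : ∀ q ∈ T.filter (¬ · % 4 = 3), (q : ZMod 4) = 1 := by
    intro q hq
    obtain ⟨hqT, hq3⟩ := Finset.mem_filter.mp hq
    have : q % 4 = 1 := by have := Nat.odd_iff.mp (hT q hqT); omega
    rw [← ZMod.natCast_mod, this, Nat.cast_one]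
  rw [Nat.cast_prod, ← Finset.prod_filter_mul_prod_filter_not T (· % 4 = 3),
    Finset.prod_congr rfl h3, Finset.prod_congr rfl h1, Finset.prod_const, Finset.prod_const_one,
    mul_one]

theorem isCoprime_prod_erase {T : Finset ℕ} (hT : ∀ p ∈ T, p.Prime) {q : ℕ} (hq : q ∈ T) :
    IsCoprime (q : ℤ) (∏ p ∈ T.erase q, p : ℕ) :=
  Nat.isCoprime_iff_coprime.mpr <| Nat.Coprime.prod_right fun p hp ↦
    (Nat.coprime_primes (hT q hq) (hT p (Finset.mem_of_mem_erase hp))).mpr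
      (Finset.ne_of_mem_erase hp).symm

theorem zmod_four_eq_one_or_eq_one_of_mul_eq_neg_one {x y : ZMod 4} (h : x * y = -1) :
    x = 1 ∨ y = 1 := by
  revert x y; decide

theorem Algebra.adjoin_singleton_eq_top_of_mem {R A : Type*} [CommSemiring R] [Semiring A]
    [Algebra R A] {x y : A} (hx : Algebra.adjoin R {x} = ⊤) (hxy : x ∈ Algebra.adjoin R {y}) :
    Algebra.adjoin R {y} = ⊤ :=
  top_unique (hx ▸ Algebra.adjoin_le (Set.singleton_subset_iff.mpr hxy))

theorem exists_sq_eq_of_sq_eq_mul {K L : Type*} [Field K] [Field L] [Algebra K L] {a b s : K}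
    (ha : a ≠ 0) (hb : b ≠ 0) (hs : s ^ 2 = a * b) {r : L} (hr : r ^ 2 = algebraMap K L a)
    (hrK : r ∉ (algebraMap K L).range) (hrgen : Algebra.adjoin K {r} = ⊤) :
    ∃ t : L, t ^ 2 = algebraMap K L b ∧ t ∉ (algebraMap K L).range ∧
      Algebra.adjoin K {t} = ⊤ := by
  have hs0 : s ≠ 0 := by rintro rfl; simp_all
  set t := algebraMap K L (s / a) * r with ht
  have hrt : r = algebraMap K L (a / s) * t := by
    rw [ht, ← mul_assoc, ← map_mul, div_mul_div_cancel₀ hs0, div_self ha, map_one, one_mul]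
  refine ⟨t, ?_, ?_, ?_⟩
  · rw [ht, mul_pow, ← map_pow, hr, ← map_mul, div_pow, hs]
    congr 1
    field_simp
  · rintro ⟨c, hc⟩
    exact hrK ⟨a / s * c, by rw [map_mul, hc, ← hrt]⟩
  · refine Algebra.adjoin_singleton_eq_top_of_mem hrgen ?_
    rw [hrt]
    exact mul_mem (Subalgebra.algebraMap_mem _ _) (Algebra.self_mem_adjoin_singleton K t)

theorem minpoly_eq_of_natDegree_eq_two {R S : Type*} [CommRing R] [IsDomain R]
    [IsIntegrallyClosed R] [CommRing S] [IsDomain S] [Algebra R S] [Module.IsTorsionFree R S]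
    {θ : S} {f : R[X]} (hf : f.Monic) (hdeg : f.natDegree = 2) (hθf : aeval θ f = 0)
    (hθ : θ ∉ (algebraMap R S).range) : minpoly R θ = f := by
  have hint : IsIntegral R θ := ⟨f, hf, hθf⟩
  refine (minpoly.IsIntegrallyClosed.unique_of_degree_le_degree_minpoly hf hθf ?_).symm
  rw [degree_eq_natDegree hf.ne_zero, degree_eq_natDegree (minpoly.ne_zero hint), hdeg]
  exact_mod_cast (minpoly.two_le_natDegree_iff hint).mpr hθ

section

variable {K L : Type*} [Field K] [NumberField K] [Field L] [NumberField L] [Algebra K L]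

theorem dvd_differentIdeal_of_ramificationIdx'_ne_one {𝔭 : Ideal (𝓞 K)} [𝔭.IsMaximal]
    (h𝔭 : 𝔭 ≠ ⊥) {P : Ideal (𝓞 L)} (hle : 𝔭.map (algebraMap (𝓞 K) (𝓞 L)) ≤ P)
    (he : Ideal.ramificationIdx' 𝔭 P ≠ 1) : P ∣ differentIdeal (𝓞 K) (𝓞 L) := by
  have hP2 : P ^ 2 ∣ 𝔭.map (algebraMap (𝓞 K) (𝓞 L)) :=
    Ideal.dvd_iff_le.mpr ((Ideal.ramificationIdx'_ne_one_iff hle).mp he)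
  simpa using pow_sub_one_dvd_differentIdeal (𝓞 K) P 2 h𝔭 hP2

theorem differentIdeal_eq_top_of_top_eq_bot (h : (⊤ : Subalgebra K L) = ⊥) :
    differentIdeal (𝓞 K) (𝓞 L) = ⊤ := by
  have hgen : Algebra.adjoin K {algebraMap (𝓞 L) L 0} = ⊤ := by
    rw [map_zero, Algebra.adjoin_singleton_zero, h]
  have := aeval_derivative_mem_differentIdeal (𝓞 K) K L 0 hgen
  rw [← map_zero (algebraMap (𝓞 K) (𝓞 L)), minpoly.eq_X_sub_C_of_algebraMap_inj _
    (FaithfulSMul.algebraMap_injective _ _)] at this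
  simpa [Ideal.eq_top_iff_one] using this

variable {P : Ideal (𝓞 L)}

theorem two_mul_add_mem_of_dvd_differentIdeal (hP : P ∣ differentIdeal (𝓞 K) (𝓞 L))
    {θ : 𝓞 L} {b c : 𝓞 K} (hθ : θ ^ 2 + algebraMap _ _ b * θ + algebraMap _ _ c = 0)
    (hθK : (θ : L) ∉ (algebraMap K L).range) (hgen : Algebra.adjoin K {(θ : L)} = ⊤) :
    2 * θ + algebraMap _ _ b ∈ P := by
  have hθK' : θ ∉ (algebraMap (𝓞 K) (𝓞 L)).range := by
    rintro ⟨x, rfl⟩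
    exact hθK ⟨x, (IsScalarTower.algebraMap_apply (𝓞 K) (𝓞 L) L x).symm ▸ rfl⟩
  have hmin : minpoly (𝓞 K) θ = X ^ 2 + C b * X + C c :=
    minpoly_eq_of_natDegree_eq_two (by monicity!) (by compute_degree!) (by simpa using hθ) hθK'
  have := Ideal.le_of_dvd hP (aeval_derivative_mem_differentIdeal (𝓞 K) K L θ hgen)
  simpa [hmin, derivative_X_sq, one_add_one_eq_two, map_ofNat] using this

theorem two_mul_intCast_mem_of_sq_eq (hP : P ∣ differentIdeal (𝓞 K) (𝓞 L)) {a : ℤ} {w : L}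
    (hw : w ^ 2 = a) (hwK : w ∉ (algebraMap K L).range) (hgen : Algebra.adjoin K {w} = ⊤) :
    2 * (a : 𝓞 L) ∈ P := by
  have hint : IsIntegral ℤ w :=
    .of_pow two_pos (hw ▸ (map_intCast (algebraMap ℤ L) a) ▸ isIntegral_algebraMap)
  obtain ⟨W, rfl⟩ : ∃ W : 𝓞 L, (W : L) = w := ⟨⟨w, hint⟩, rfl⟩
  have hW : W ^ 2 = a := RingOfIntegers.coe_injective (by simpa using hw)
  have h2W : 2 * W ∈ P := by
    simpa using two_mul_add_mem_of_dvd_differentIdeal hP (b := 0) (c := -a)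
      (by simp [hW]) hwK hgen
  simpa [← hW, sq, mul_assoc] using P.mul_mem_right W h2W

theorem mem_of_sq_eq_four_mul_add_one (hP : P ∣ differentIdeal (𝓞 K) (𝓞 L)) {k : ℤ} {w : L}
    (hw : w ^ 2 = 4 * k + 1) (hwK : w ∉ (algebraMap K L).range)
    (hgen : Algebra.adjoin K {w} = ⊤) : 4 * (k : 𝓞 L) + 1 ∈ P := by
  have hθ : ((1 + w) / 2) ^ 2 - (1 + w) / 2 - k = 0 := by
    linear_combination hw / 4
  have hint : IsIntegral ℤ ((1 + w) / 2) :=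
    ⟨X ^ 2 - X - C k, by monicity!, by rw [← aeval_def]; simpa using hθ⟩
  obtain ⟨θ, hθw⟩ : ∃ θ : 𝓞 L, (θ : L) = (1 + w) / 2 := ⟨⟨_, hint⟩, rfl⟩
  have hwθ : w = 2 * θ - 1 := by rw [hθw]; ring
  have hθK : (θ : L) ∉ (algebraMap K L).range := by
    rintro ⟨c, hc⟩
    exact hwK ⟨2 * c - 1, by simp [hc, hwθ, map_ofNat]⟩
  have hθgen : Algebra.adjoin K {(θ : L)} = ⊤ :=
    Algebra.adjoin_singleton_eq_top_of_mem hgen (hwθ ▸ sub_mem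
      (mul_mem (ofNat_mem _ 2) (Algebra.self_mem_adjoin_singleton K _)) (one_mem _))
  have h : 2 * θ - 1 ∈ P := by
    simpa [sub_eq_add_neg] using two_mul_add_mem_of_dvd_differentIdeal hP (b := -1) (c := -k)
      (RingOfIntegers.coe_injective (by rw [← hθw] at hθ; simp only [map_add, map_pow, map_neg,
        map_one, neg_mul, one_mul, map_intCast, map_zero]; linear_combination hθ)) hθK hθgen
  have h2 : (2 * θ - 1) ^ 2 = 4 * (k : 𝓞 L) + 1 :=
    RingOfIntegers.coe_injective (by simpa [map_ofNat, ← hwθ] using hw)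
  simpa [h2] using P.pow_mem_of_mem h 2 two_pos

theorem eq_top_of_dvd_differentIdeal_of_sq_eq (hP : P ∣ differentIdeal (𝓞 K) (𝓞 L))
    {a b : ℤ} (hab : IsCoprime a b) (ha : (a : ZMod 4) = 1) {u v : L} (hu : u ^ 2 = a)
    (hv : v ^ 2 = b) (huK : u ∉ (algebraMap K L).range) (hvK : v ∉ (algebraMap K L).range)
    (hugen : Algebra.adjoin K {u} = ⊤) (hvgen : Algebra.adjoin K {v} = ⊤) : P = ⊤ := by
  obtain ⟨k, hk⟩ : (4 : ℤ) ∣ a - 1 :=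
    (ZMod.intCast_zmod_eq_zero_iff_dvd _ 4).mp (by push_cast [ha]; ring)
  obtain rfl : a = 4 * k + 1 := by linarith
  have haP : ((4 * k + 1 : ℤ) : 𝓞 L) ∈ P := by
    simpa using mem_of_sq_eq_four_mul_add_one hP (by simpa using hu) huK hugen
  have hbP : ((2 * b : ℤ) : 𝓞 L) ∈ P := by
    simpa using two_mul_intCast_mem_of_sq_eq hP hv hvK hvgen
  have hcop : IsCoprime (4 * k + 1) (2 * b) := .mul_right ⟨1, -2 * k, by ring⟩ hab
  obtain ⟨x, y, hxy⟩ := hcop.map (Int.castRingHom (𝓞 L))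
  rw [Ideal.eq_top_iff_one, ← hxy]
  exact add_mem (P.mul_mem_left x haP) (P.mul_mem_left y hbP)

end

theorem quadratic_extension_unramified_general
    (T : Finset ℕ) (hT : ∀ q ∈ T, q.Prime ∧ Odd q)
    (hT3 : Odd (T.filter (fun q => q % 4 = 3)).card)
    (Q : Type) [Field Q] [NumberField Q]
    (s : Q) (hs : s ^ 2 = ((∏ q ∈ T, q : ℕ) : Q))
    (q : ℕ) (hq : q ∈ T)
    (L : Type) [Field L] [NumberField L] [Algebra Q L]
    (r : L) (hr : r ^ 2 = (q : L)) (hLgen : Algebra.adjoin Q {r} = ⊤) :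
    ∀ (𝔭 : Ideal (𝓞 Q)) (P : Ideal (𝓞 L)), 𝔭.IsPrime → 𝔭 ≠ ⊥ → P.IsPrime → P ≠ ⊥ →
      Ideal.comap (algebraMap (𝓞 Q) (𝓞 L)) P = 𝔭 →
      Ideal.ramificationIdx' 𝔭 P = 1 := by
  intro 𝔭 P h𝔭 h𝔭0 hP _ hcomap
  have := h𝔭.isMaximal h𝔭0
  by_contra he
  have hdiff := dvd_differentIdeal_of_ramificationIdx'_ne_one h𝔭0
    (Ideal.map_le_iff_le_comap.mpr hcomap.ge) he
  refine hP.ne_top ?_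
  by_cases hrQ : r ∈ (algebraMap Q L).range
  · have hbot : (⊤ : Subalgebra Q L) = ⊥ := hLgen ▸ le_bot_iff.mp
      (Algebra.adjoin_le (Set.singleton_subset_iff.mpr (Algebra.mem_bot.mpr hrQ)))
    rwa [differentIdeal_eq_top_of_top_eq_bot hbot, Ideal.dvd_iff_le, top_le_iff] at hdiff
  set m := ∏ p ∈ T.erase q, p
  have hqm : ∏ p ∈ T, p = q * m := (Finset.mul_prod_erase T _ hq).symm
  obtain ⟨hq0, hm0⟩ : q ≠ 0 ∧ m ≠ 0 :=
    mul_ne_zero_iff.mp (hqm ▸ Finset.prod_ne_zero_iff.mpr fun p hp ↦ (hT p hp).1.ne_zero)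
  have hcop := isCoprime_prod_erase (fun p hp ↦ (hT p hp).1) hq
  have h4 : ((q : ℤ) : ZMod 4) * ((m : ℤ) : ZMod 4) = -1 := by
    have := natCast_prod_zmod_four fun p hp ↦ (hT p hp).2
    rw [hT3.neg_one_pow, hqm] at this
    exact_mod_cast this
  obtain ⟨t, ht, htQ, htgen⟩ := exists_sq_eq_of_sq_eq_mul (Nat.cast_ne_zero.mpr hq0)
    (Nat.cast_ne_zero.mpr hm0) (by rw [hs, hqm, Nat.cast_mul]) (by rw [hr, map_natCast]) hrQ hLgen
  have hr' : r ^ 2 = ((q : ℤ) : L) := by rw [hr, Int.cast_natCast]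
  have ht' : t ^ 2 = ((m : ℤ) : L) := by rw [ht, map_natCast, Int.cast_natCast]
  rcases zmod_four_eq_one_or_eq_one_of_mul_eq_neg_one h4 with h | h
  · exact eq_top_of_dvd_differentIdeal_of_sq_eq hdiff hcop h hr' ht' hrQ htQ hLgen htgen
  · exact eq_top_of_dvd_differentIdeal_of_sq_eq hdiff hcop.symm h ht' hr' htQ hrQ htgen hLgen

/-- Let `T` be a finite set of odd primes with an odd number of elements congruent to `3`
mod `4`, let `Q = ℚ(√(∏_{q ∈ T} q))` (modelled abstractly: `Q` is a number field generated
over `ℚ` by a square root `s` of `∏_{q ∈ T} q`), and let `q ∈ T`.  Then the quadratic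
extension `Q(√q)/Q` (modelled as an extension `L` of `Q` generated over `Q` by a square root
of `q`) is unramified at every finite place of `Q`. -/
theorem quadratic_extension_unramified
    (T : Finset ℕ) (hT : ∀ q ∈ T, q.Prime ∧ Odd q)
    (hT3 : Odd (T.filter (fun q => q % 4 = 3)).card)
    (Q : Type) [Field Q] [NumberField Q]
    (s : Q) (hs : s ^ 2 = ((∏ q ∈ T, q : ℕ) : Q)) (hQgen : Algebra.adjoin ℚ {s} = ⊤)
    (q : ℕ) (hq : q ∈ T)
    (L : Type) [Field L] [NumberField L] [Algebra Q L]
    (r : L) (hr : r ^ 2 = (q : L)) (hLgen : Algebra.adjoin Q {r} = ⊤) :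
    ∀ (𝔭 : Ideal (𝓞 Q)) (P : Ideal (𝓞 L)), 𝔭.IsPrime → 𝔭 ≠ ⊥ → P.IsPrime → P ≠ ⊥ →
      Ideal.comap (algebraMap (𝓞 Q) (𝓞 L)) P = 𝔭 →
      Ideal.ramificationIdx' 𝔭 P = 1 :=
  quadratic_extension_unramified_general T hT hT3 Q s hs q hq L r hr hLgen
end
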